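/- arXiv:2110.02575 — 2 statements merged into one kernel-verified Lean document; each statement's English description precedes it below -/
import Mathlib

section
/- For all integers a ≥ 2, b ≥ 0 and every integer k with 1 ≤ k ≤ a−1, one has t(a,b) = t(a−k, b+k). -/
/-!
Setting `X = 1` identifies `T(a, b)`, for `a > 0`, with the pairs `(u, v)` of coprime univariate
polynomials with `deg u = a` and `deg v ≤ b`: a common factor of `u` and `v` homogenizes to one of
`J` and `L`, and conversely homogenizing a Bézout identity `s u + t v = 1` shows that a common
factor of `J` and `L` divides a power of `X`, which `X ∤ J` rules out. With `q = |F|` these pairs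
number `(q - 1)² q^(a + b)`, which depends on `a + b` only. Euclidean division `v = u w + r` shows
that raising the bound on `deg v` from `deg u - 1` to `deg u - 1 + c` multiplies the count by
`q^c`; below `deg u` the count follows by strong induction on `deg u`, because pairs of exact
degrees `(a, c)` and `(c, a)` are equinumerous.
-/

open MvPolynomial

/-- The set `T(a,b)` of pairs `(J, L)` of nonzero homogeneous polynomials in `F[X,Y]`
of degrees `a` and `b` respectively, which are relatively prime (every common divisor
is a unit) and such that `X` does not divide `J`. -/
def wplT (F : Type*) [Field F] (a b : ℕ) :
    Set (MvPolynomial (Fin 2) F × MvPolynomial (Fin 2) F) :=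
  {P | P.1 ≠ 0 ∧ P.2 ≠ 0 ∧ P.1.IsHomogeneous a ∧ P.2.IsHomogeneous b ∧
    IsRelPrime P.1 P.2 ∧ ¬ (X 0 ∣ P.1)}

open scoped Polynomial

namespace BinaryForm

section CommSemiring

variable {R : Type*} [CommSemiring R]

/-- Homogenization with `X 0` as the homogenizing variable (`Polynomial.homogenize` uses `X 1`),
to match the condition `¬ X 0 ∣ J` in `wplT`. -/
noncomputable def homogenize (p : R[X]) (n : ℕ) : MvPolynomial (Fin 2) R :=
  rename (Equiv.swap 0 1) (p.homogenize n)

noncomputable def dehomogenize : MvPolynomial (Fin 2) R →ₐ[R] R[X] :=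
  aeval ![1, Polynomial.X]

lemma rename_swap_rename_swap (P : MvPolynomial (Fin 2) R) :
    rename (Equiv.swap 0 1) (rename (Equiv.swap 0 1) P) = P := by
  rw [rename_rename, Function.Involutive.comp_self (Equiv.swap_apply_self 0 1), rename_id_apply]

lemma dehomogenize_rename_swap (P : MvPolynomial (Fin 2) R) :
    dehomogenize (rename (Equiv.swap 0 1) P) = aeval ![Polynomial.X, 1] P := by
  rw [dehomogenize, aeval_rename]
  congr 2
  funext i
  fin_cases i <;> rfl

@[simp]
lemma homogenize_zero (n : ℕ) : homogenize (0 : R[X]) n = 0 := by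
  simp [homogenize]

lemma homogenize_add (p q : R[X]) (n : ℕ) :
    homogenize (p + q) n = homogenize p n + homogenize q n := by
  simp [homogenize]

lemma homogenize_one (n : ℕ) : homogenize (1 : R[X]) n = X 0 ^ n := by
  simp [homogenize]

lemma homogenize_mul {p q : R[X]} {m n : ℕ} (hp : p.natDegree ≤ m) (hq : q.natDegree ≤ n) :
    homogenize (p * q) (m + n) = homogenize p m * homogenize q n := by
  rw [homogenize, Polynomial.homogenize_mul p q hp hq, map_mul]
  rfl

lemma homogenize_dvd_homogenize_mul {r f : R[X]} {k N : ℕ} (hr : r.natDegree + k ≤ N)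
    (hf : f.natDegree ≤ k) : homogenize f k ∣ homogenize (r * f) N := by
  obtain ⟨l, rfl⟩ := Nat.exists_eq_add_of_le hr
  rw [show r.natDegree + k + l = r.natDegree + l + k by omega,
    homogenize_mul (Nat.le_add_right _ l) hf]
  exact dvd_mul_left _ _

lemma isHomogeneous_homogenize (p : R[X]) (n : ℕ) : (homogenize p n).IsHomogeneous n :=
  (Polynomial.isHomogeneous_homogenize p).rename_isHomogeneous

lemma dehomogenize_homogenize {p : R[X]} {n : ℕ} (hp : p.natDegree ≤ n) :
    dehomogenize (homogenize p n) = p := by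
  rw [homogenize, dehomogenize_rename_swap, Polynomial.aeval_homogenize_X_one p hp]

lemma homogenize_dehomogenize {J : MvPolynomial (Fin 2) R} {n : ℕ} (hJ : J.IsHomogeneous n) :
    homogenize (dehomogenize J) n = J := by
  rw [← rename_swap_rename_swap J, dehomogenize_rename_swap, homogenize,
    Polynomial.homogenize_eq_of_isHomogeneous hJ.rename_isHomogeneous rfl]

lemma eq_of_dehomogenize_eq {J J' : MvPolynomial (Fin 2) R} {n : ℕ} (hJ : J.IsHomogeneous n)
    (hJ' : J'.IsHomogeneous n) (h : dehomogenize J = dehomogenize J') : J = J' := by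
  rw [← homogenize_dehomogenize hJ, h, homogenize_dehomogenize hJ']

lemma natDegree_dehomogenize_le {J : MvPolynomial (Fin 2) R} {n : ℕ} (hJ : J.IsHomogeneous n) :
    (dehomogenize J).natDegree ≤ n := by
  rw [J.as_sum, map_sum]
  refine Polynomial.natDegree_sum_le_of_forall_le _ _ fun m hm => ?_
  have hm : m 0 + m 1 = n := by
    simpa [Finsupp.weight_apply, Finsupp.sum_fintype, Fin.sum_univ_two] using
      hJ (mem_support_iff.mp hm)
  simp only [dehomogenize, aeval_monomial, Finsupp.prod_fintype _ _ (fun i => pow_zero _),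
    Fin.prod_univ_two, Matrix.cons_val_zero, Matrix.cons_val_one, one_pow, one_mul,
    ← Polynomial.C_eq_algebraMap]
  exact (Polynomial.natDegree_C_mul_X_pow_le _ _).trans (by omega)

lemma coeff_single_one_homogenize (p : R[X]) (n : ℕ) :
    (homogenize p n).coeff (Finsupp.single 1 n) = p.coeff n := by
  have h := coeff_rename_mapDomain _ (Equiv.swap (0 : Fin 2) 1).injective (p.homogenize n)
    (Finsupp.single 0 n)
  rw [Finsupp.mapDomain_single, Equiv.swap_apply_left] at h
  rw [homogenize, h, Polynomial.coeff_homogenize]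
  simp

lemma X_zero_dvd_homogenize_iff {p : R[X]} {n : ℕ} (hp : p.natDegree ≤ n) :
    X 0 ∣ homogenize p n ↔ p.coeff n = 0 := by
  refine ⟨fun ⟨G, hG⟩ => ?_, fun h => ?_⟩
  · rw [← coeff_single_one_homogenize, hG, coeff_X_mul']
    simp
  rcases n with _ | n
  · rw [Polynomial.eq_C_of_natDegree_le_zero hp, h, map_zero, homogenize_zero]
    exact dvd_zero _
  · have hp' : p.natDegree ≤ n := Polynomial.natDegree_le_iff_coeff_eq_zero.mpr fun N hN => by
      rcases (Nat.succ_le_of_lt hN).eq_or_lt with rfl | hN'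
      · exact h
      · exact Polynomial.coeff_eq_zero_of_natDegree_lt (hp.trans_lt hN')
    rw [← one_mul p, add_comm, homogenize_mul (m := 1) (by simp) hp', homogenize_one,
      pow_one]
    exact dvd_mul_right _ _

end CommSemiring

section Field

variable {K : Type*} [Field K]

lemma homogenize_natDegree_dvd_homogenize {d p : K[X]} {m : ℕ} (hd : d ∣ p)
    (hp : p.natDegree ≤ m) : homogenize d d.natDegree ∣ homogenize p m := by
  obtain ⟨e, rfl⟩ := hd
  rcases eq_or_ne (d * e) 0 with h0 | h0
  · simp [h0]
  obtain ⟨hd0, he0⟩ := mul_ne_zero_iff.mp h0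
  rw [Polynomial.natDegree_mul hd0 he0] at hp
  rw [mul_comm]
  exact homogenize_dvd_homogenize_mul (by omega) le_rfl

lemma isCoprime_of_isRelPrime_homogenize {p q : K[X]} {m n : ℕ} (hp : p.natDegree ≤ m)
    (hq : q.natDegree ≤ n) (h : IsRelPrime (homogenize p m) (homogenize q n)) :
    IsCoprime p q := by
  rw [← isRelPrime_iff_isCoprime]
  intro d hdp hdq
  simpa [dehomogenize_homogenize le_rfl] using
    (h (homogenize_natDegree_dvd_homogenize hdp hp)
      (homogenize_natDegree_dvd_homogenize hdq hq)).map dehomogenize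

lemma isRelPrime_homogenize_of_isCoprime {p q : K[X]} {m n : ℕ} (hp : p.natDegree ≤ m)
    (hq : q.natDegree ≤ n) (hX : ¬ X 0 ∣ homogenize p m) (h : IsCoprime p q) :
    IsRelPrime (homogenize p m) (homogenize q n) := by
  obtain ⟨s, t, hst⟩ := h
  intro D hDp hDq
  set N := s.natDegree + t.natDegree + m + n
  have hXN : IsRelPrime (homogenize p m) (X 0 ^ N) :=
    (X_prime.irreducible.isRelPrime_iff_not_dvd.mpr hX).symm.pow_right
  refine hXN hDp ?_
  rw [← homogenize_one, ← hst, homogenize_add]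
  exact dvd_add (hDp.trans (homogenize_dvd_homogenize_mul (by omega) hp))
    (hDq.trans (homogenize_dvd_homogenize_mul (by omega) hq))

end Field

end BinaryForm

namespace Polynomial

section Semiring

variable {R : Type*} [Semiring R]

lemma degree_lt_add_one_iff {p : R[X]} {n : ℕ} : p.degree < ↑(n + 1) ↔ p.degree ≤ n := by
  rw [← mem_degreeLT, degreeLT_succ_eq_degreeLE, mem_degreeLE]

lemma degree_add_mul_le_iff [NoZeroDivisors R] {u r w : R[X]} {a c : ℕ}
    (hu : u.degree = ↑(a + 1)) (hr : r.degree ≤ a) :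
    (r + u * w).degree ≤ ↑(a + c) ↔ w.degree < c := by
  rcases eq_or_ne w 0 with rfl | hw
  · simpa using hr.trans (by exact_mod_cast Nat.le_add_right a c)
  have huw : (u * w).degree = ↑(a + 1 + w.natDegree) := by
    rw [degree_mul, hu, degree_eq_natDegree hw]
    norm_cast
  have hlt : r.degree < (u * w).degree :=
    hr.trans_lt (by rw [huw]; exact_mod_cast (by omega : a < a + 1 + w.natDegree))
  rw [degree_add_eq_right_of_degree_lt hlt, huw, degree_eq_natDegree hw]
  norm_cast
  omega

lemma ncard_setOf_degree_lt (n : ℕ) :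
    {p : R[X] | p.degree < (n : WithBot ℕ)}.ncard = Nat.card R ^ n := by
  calc _ = Nat.card (Fin n → R) := by
        rw [← Nat.card_coe_set_eq]
        exact Nat.card_congr <|
          (Equiv.subtypeEquivRight fun _ => mem_degreeLT.symm).trans (degreeLTEquiv R n).toEquiv
    _ = _ := by rw [Nat.card_fun, Nat.card_fin]

variable [Finite R]

lemma finite_setOf_degree_lt (n : ℕ) : {p : R[X] | p.degree < (n : WithBot ℕ)}.Finite :=
  Set.finite_of_ncard_pos (by rw [ncard_setOf_degree_lt]; exact pow_pos Nat.card_pos n)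

lemma ncard_setOf_degree_eq (n : ℕ) :
    {p : R[X] | p.degree = (n : WithBot ℕ)}.ncard = (Nat.card R - 1) * Nat.card R ^ n := by
  have h : {p : R[X] | p.degree = (n : WithBot ℕ)} =
      {p | p.degree < ↑(n + 1)} \ {p | p.degree < (n : WithBot ℕ)} := by
    ext p
    simp only [Set.mem_ofPred_eq, Set.mem_sdiff, degree_lt_add_one_iff, not_lt, le_antisymm_iff]
  have hsub : {p : R[X] | p.degree < (n : WithBot ℕ)} ⊆ {p | p.degree < ↑(n + 1)} :=
    fun p (hp : p.degree < n) => degree_lt_add_one_iff.mpr hp.le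
  rw [h, Set.ncard_sdiff hsub (finite_setOf_degree_lt n), ncard_setOf_degree_lt,
    ncard_setOf_degree_lt, pow_succ, Nat.sub_mul, one_mul, mul_comm]

end Semiring

def coprimePairs (F : Type*) [Field F] (a b : ℕ) : Set (F[X] × F[X]) :=
  {p | p.1.degree = a ∧ p.2.degree ≤ b ∧ IsCoprime p.1 p.2}

def exactCoprimePairs (F : Type*) [Field F] (a c : ℕ) : Set (F[X] × F[X]) :=
  {p | p.1.degree = a ∧ p.2.degree = c ∧ IsCoprime p.1 p.2}

variable {F : Type*} [Field F]

lemma ne_zero_of_isCoprime_of_degree_pos {u v : F[X]} (h : IsCoprime u v) (hu : 0 < u.degree) :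
    v ≠ 0 := by
  rintro rfl
  exact hu.ne' (isUnit_iff_degree_eq_zero.mp (isCoprime_zero_right.mp h))

lemma add_mul_mod_of_degree_lt {r u : F[X]} (w : F[X]) (hr : r.degree < u.degree) :
    (r + u * w) % u = r := by
  have hu : u ≠ 0 := by
    rintro rfl
    exact not_lt_bot (degree_zero (R := F) ▸ hr)
  rw [add_mod, EuclideanDomain.mod_eq_zero.mpr (dvd_mul_right u w), add_zero,
    mod_eq_self_iff hu]
  exact hr

lemma exactCoprimePairs_subset (a c : ℕ) : exactCoprimePairs F a c ⊆ coprimePairs F a c :=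
  fun _ hp => ⟨hp.1, hp.2.1.le, hp.2.2⟩

lemma ncard_exactCoprimePairs_comm (a c : ℕ) :
    (exactCoprimePairs F a c).ncard = (exactCoprimePairs F c a).ncard :=
  Set.ncard_congr (fun p _ => p.swap) (fun _ hp => ⟨hp.2.1, hp.1, hp.2.2.symm⟩)
    (fun _ _ _ _ => Prod.swap_inj.mp)
    (fun p hp => ⟨p.swap, ⟨hp.2.1, hp.1, hp.2.2.symm⟩, p.swap_swap⟩)

lemma coprimePairs_add_one_zero (a : ℕ) :
    coprimePairs F (a + 1) 0 = exactCoprimePairs F (a + 1) 0 := by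
  refine Set.Subset.antisymm (fun ⟨u, v⟩ ⟨hu, hv, huv⟩ => ⟨hu, ?_, huv⟩)
    (exactCoprimePairs_subset _ 0)
  have hv0 := ne_zero_of_isCoprime_of_degree_pos huv (by rw [hu]; exact_mod_cast a.succ_pos)
  exact le_antisymm hv (zero_le_degree_iff.mpr hv0)

lemma ncard_coprimePairs_add (a c : ℕ) :
    (coprimePairs F (a + 1) (a + c)).ncard = Nat.card F ^ c * (coprimePairs F (a + 1) a).ncard := by
  rw [← ncard_setOf_degree_lt c, ← Set.ncard_prod]
  symm
  refine Set.ncard_congr (fun x _ => (x.2.1, x.2.2 + x.2.1 * x.1)) ?_ ?_ ?_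
  · rintro ⟨w, u, r⟩ ⟨hw, hu, hr, hur⟩
    exact ⟨hu, (degree_add_mul_le_iff hu hr).mpr hw, IsCoprime.add_mul_left_right_iff.mpr hur⟩
  · rintro ⟨w, u, r⟩ ⟨w', u', r'⟩ ⟨-, hu, hr, -⟩ ⟨-, -, hr', -⟩ h
    simp only [Prod.mk.injEq] at h
    obtain ⟨rfl, h⟩ := h
    have hr_lt : r.degree < u.degree := hu ▸ degree_lt_add_one_iff.mpr hr
    have hr'_lt : r'.degree < u.degree := hu ▸ degree_lt_add_one_iff.mpr hr'
    obtain rfl : r = r' := by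
      rw [← add_mul_mod_of_degree_lt w hr_lt, h, add_mul_mod_of_degree_lt w' hr'_lt]
    have hu0 : u ≠ 0 := ne_zero_of_coe_le_degree hu.ge
    simp [mul_left_cancel₀ hu0 (add_left_cancel h)]
  · rintro ⟨u, v⟩ ⟨hu, hv, huv⟩
    have hu0 : u ≠ 0 := ne_zero_of_coe_le_degree hu.ge
    have hv' : v = v % u + u * (v / u) := (EuclideanDomain.mod_add_div v u).symm
    have hr : (v % u).degree ≤ a := degree_lt_add_one_iff.mp (hu ▸ degree_mod_lt v hu0)
    refine ⟨(v / u, u, v % u),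
      ⟨(degree_add_mul_le_iff hu hr).mp (hv' ▸ hv), hu, hr, ?_⟩, ?_⟩
    · rw [hv'] at huv
      exact IsCoprime.add_mul_left_right_iff.mp huv
    · simp [← hv']

section Finite

variable [Finite F]

lemma finite_coprimePairs (a b : ℕ) : (coprimePairs F a b).Finite :=
  ((finite_setOf_degree_lt (a + 1)).prod (finite_setOf_degree_lt (b + 1))).subset
    fun _ hp => ⟨degree_lt_add_one_iff.mpr hp.1.le, degree_lt_add_one_iff.mpr hp.2.1⟩

lemma ncard_exactCoprimePairs_zero (a : ℕ) :
    (exactCoprimePairs F a 0).ncard = (Nat.card F - 1) ^ 2 * Nat.card F ^ a := by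
  have h : exactCoprimePairs F a 0 =
      {p : F[X] | p.degree = (a : WithBot ℕ)} ×ˢ
        {p : F[X] | p.degree = ((0 : ℕ) : WithBot ℕ)} := by
    ext ⟨u, v⟩
    refine ⟨fun ⟨hu, hv, _⟩ => ⟨hu, hv⟩, fun ⟨hu, hv⟩ => ⟨hu, hv, ?_⟩⟩
    exact isRelPrime_iff_isCoprime.mp (isUnit_iff_degree_eq_zero.mpr hv).isRelPrime_right
  rw [h, Set.ncard_prod, ncard_setOf_degree_eq, ncard_setOf_degree_eq]
  ring

lemma ncard_coprimePairs_add_one (a b : ℕ) :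
    (coprimePairs F a (b + 1)).ncard =
      (coprimePairs F a b).ncard + (exactCoprimePairs F a (b + 1)).ncard := by
  have h : coprimePairs F a (b + 1) = coprimePairs F a b ∪ exactCoprimePairs F a (b + 1) := by
    ext ⟨u, v⟩
    simp only [coprimePairs, exactCoprimePairs, Set.mem_union, Set.mem_ofPred_eq]
    rw [le_iff_lt_or_eq (b := ((b + 1 : ℕ) : WithBot ℕ)), degree_lt_add_one_iff]
    tauto
  rw [h, Set.ncard_union_eq ?_ (finite_coprimePairs a b)
    ((finite_coprimePairs a (b + 1)).subset (exactCoprimePairs_subset a (b + 1)))]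
  rw [Set.disjoint_left]
  rintro p hp hp'
  have := hp.2.1
  rw [hp'.2.1] at this
  norm_cast at this
  omega

theorem ncard_coprimePairs (a b : ℕ) :
    (coprimePairs F (a + 1) b).ncard = (Nat.card F - 1) ^ 2 * Nat.card F ^ (a + 1 + b) := by
  induction a using Nat.strong_induction_on generalizing b with
  | _ a ih =>
    have low : ∀ b ≤ a, (coprimePairs F (a + 1) b).ncard =
        (Nat.card F - 1) ^ 2 * Nat.card F ^ (a + 1 + b) := by
      intro b hb
      induction b with
      | zero => rw [coprimePairs_add_one_zero, ncard_exactCoprimePairs_zero, add_zero]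
      | succ b ihb =>
        -- both sides grow by the same number of pairs of exact degrees `(a + 1, b + 1)`
        have h := ncard_coprimePairs_add_one (F := F) (a + 1) b
        have h' := ncard_coprimePairs_add_one (F := F) (b + 1) a
        rw [ncard_exactCoprimePairs_comm, ihb (by omega)] at h
        rw [ih b (by omega), ih b (by omega), show b + 1 + a = a + 1 + b by omega,
          show b + 1 + (a + 1) = a + 1 + (b + 1) by omega] at h'
        omega
    rcases le_or_gt b a with hb | hb
    · exact low b hb
    · obtain ⟨c, rfl⟩ : ∃ c, b = a + c := ⟨b - a, by omega⟩
      rw [ncard_coprimePairs_add, low a le_rfl]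
      ring

end Finite

end Polynomial

open BinaryForm in
lemma ncard_wplT_eq_ncard_coprimePairs (F : Type*) [Field F] {a : ℕ} (ha : 0 < a) (b : ℕ) :
    (wplT F a b).ncard = (Polynomial.coprimePairs F a b).ncard := by
  refine Set.ncard_congr (fun P _ => (dehomogenize P.1, dehomogenize P.2)) ?_ ?_ ?_
  · rintro ⟨J, L⟩ ⟨-, -, hJ, hL, hJL, hX⟩
    rw [← homogenize_dehomogenize hJ] at hX hJL
    rw [← homogenize_dehomogenize hL] at hJL
    have hu := natDegree_dehomogenize_le hJ
    have hv := natDegree_dehomogenize_le hL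
    exact ⟨Polynomial.degree_eq_of_le_of_coeff_ne_zero
        (Polynomial.natDegree_le_iff_degree_le.mp hu) (mt (X_zero_dvd_homogenize_iff hu).mpr hX),
      Polynomial.natDegree_le_iff_degree_le.mp hv, isCoprime_of_isRelPrime_homogenize hu hv hJL⟩
  · rintro ⟨J, L⟩ ⟨J', L'⟩ ⟨-, -, hJ, hL, -⟩ ⟨-, -, hJ', hL', -⟩ h
    exact Prod.ext (eq_of_dehomogenize_eq hJ hJ' congr($h.1))
      (eq_of_dehomogenize_eq hL hL' congr($h.2))
  · rintro ⟨u, v⟩ ⟨hu, hv, huv⟩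
    have hua : u.natDegree = a := Polynomial.natDegree_eq_of_degree_eq_some hu
    have hvb : v.natDegree ≤ b := Polynomial.natDegree_le_iff_degree_le.mpr hv
    have hX : ¬ X 0 ∣ homogenize u a := by
      rw [X_zero_dvd_homogenize_iff hua.le, ← hua, Polynomial.coeff_natDegree,
        Polynomial.leadingCoeff_eq_zero]
      exact Polynomial.ne_zero_of_coe_le_degree hu.ge
    have hv0 := Polynomial.ne_zero_of_isCoprime_of_degree_pos huv
      (by rw [hu]; exact_mod_cast ha)
    refine ⟨(homogenize u a, homogenize v b), ⟨fun (h : homogenize u a = 0) => hX (by simp [h]),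
      fun (h : homogenize v b = 0) => hv0 (by rw [← dehomogenize_homogenize hvb, h, map_zero]),
      isHomogeneous_homogenize u a, isHomogeneous_homogenize v b,
      isRelPrime_homogenize_of_isCoprime hua.le hvb hX huv, hX⟩, ?_⟩
    simp only [dehomogenize_homogenize hua.le, dehomogenize_homogenize hvb]

theorem wplT_ncard_shift_general (F : Type*) [Field F] [Fintype F]
    (a b k : ℕ) (ha : 2 ≤ a) (hk2 : k ≤ a - 1) :
    (wplT F a b).ncard = (wplT F (a - k) (b + k)).ncard := by
  obtain ⟨n, rfl⟩ : ∃ n, a = n + 1 := ⟨a - 1, by omega⟩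
  obtain ⟨m, hm⟩ : ∃ m, n + 1 - k = m + 1 := ⟨n - k, by omega⟩
  rw [hm, ncard_wplT_eq_ncard_coprimePairs F n.succ_pos,
    ncard_wplT_eq_ncard_coprimePairs F m.succ_pos, Polynomial.ncard_coprimePairs,
    Polynomial.ncard_coprimePairs]
  congr 2
  omega

/-- For `a ≥ 2` and `1 ≤ k ≤ a - 1` one has `t(a,b) = t(a-k, b+k)`. -/
theorem wplT_ncard_shift (F : Type*) [Field F] [Fintype F]
    (a b k : ℕ) (ha : 2 ≤ a) (hk1 : 1 ≤ k) (hk2 : k ≤ a - 1) :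
    (wplT F a b).ncard = (wplT F (a - k) (b + k)).ncard :=
  wplT_ncard_shift_general F a b k ha hk2
end

section
/- Let Γ = T_{p_1,…,p_t} be a star-shaped graph and ĩU^Dr the universal ıquantum loop algebra of its simply-laced GCM. Let U be a ℚ(v)-subalgebra of ĩU^Dr containing C^{±1} and K_μ^{±1} for all μ ∈ 𝕀. Suppose μ, ν ∈ 𝕀 satisfy c_{μν} = −1, that B_{μ,l} ∈ U for all l ∈ ℤ, that Θ_{μ,m} ∈ U and H_{μ,m} ∈ U for all m ≥ 1, and that B_{ν,0} ∈ U. Then B_{ν,l} ∈ U for all l ∈ ℤ and Θ_{ν,m} ∈ U for all m ≥ 1. -/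
noncomputable section

/-- The base field `ℚ(v)` of rational functions in `v` over `ℚ`. -/
abbrev Kv : Type := RatFunc ℚ

/-- The element `v` of `ℚ(v)`. -/
def vv : Kv := RatFunc.X

/-- The quantum integer `[r] = (v^r - v^{-r})/(v - v⁻¹)`. -/
def qint (r : ℤ) : Kv := (vv ^ r - vv ^ (-r)) / (vv - vv⁻¹)

/-- Generators of the universal ıquantum loop algebra: `K_μ^{±1}`, `C^{±1}`,
`H_{μ,m}` (`m ≥ 1`, where `Gen.H μ n` stands for `H_{μ,n+1}`) and `B_{μ,l}` (`l ∈ ℤ`). -/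
inductive Gen (I : Type) : Type
  | K : I → Gen I
  | Kinv : I → Gen I
  | C : Gen I
  | Cinv : Gen I
  | H : I → ℕ → Gen I
  | B : I → ℤ → Gen I

/-- The free algebra over `ℚ(v)` on the generators. -/
abbrev FA (I : Type) : Type := FreeAlgebra Kv (Gen I)

variable {I : Type}

/-- `K_μ` -/
def gK (μ : I) : FA I := FreeAlgebra.ι Kv (Gen.K μ)

/-- `K_μ⁻¹` -/
def gKinv (μ : I) : FA I := FreeAlgebra.ι Kv (Gen.Kinv μ)

/-- `C` -/
def gC : FA I := FreeAlgebra.ι Kv Gen.C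

/-- `C⁻¹` -/
def gCinv : FA I := FreeAlgebra.ι Kv Gen.Cinv

/-- `H_{μ,m}` for `m ≥ 1`. -/
def gH (μ : I) (m : ℕ) : FA I := FreeAlgebra.ι Kv (Gen.H μ (m - 1))

/-- `B_{μ,l}`. -/
def gB (μ : I) (l : ℤ) : FA I := FreeAlgebra.ι Kv (Gen.B μ l)

/-- `C^k` for `k : ℤ`, using the formal inverse generator for negative exponents. -/
def gCpow (k : ℤ) : FA I := if 0 ≤ k then gC ^ k.toNat else gCinv ^ (-k).toNat

/-- `Θ_{μ,m}`: zero for `m < 0`, `(v-v⁻¹)⁻¹` for `m = 0`, and for `m ≥ 1` the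
expression `Σ_{k=1}^m ((v-v⁻¹)^{k-1}/k!) Σ_{m₁+⋯+m_k=m, m_j ≥ 1} H_{μ,m₁}⋯H_{μ,m_k}`. -/
def gTheta (μ : I) (m : ℤ) : FA I :=
  if m < 0 then 0
  else if m = 0 then (vv - vv⁻¹)⁻¹ • (1 : FA I)
  else ∑ k ∈ Finset.Icc 1 m.toNat,
    ((vv - vv⁻¹) ^ (k - 1) / (Nat.factorial k : Kv)) •
      ∑ c ∈ (Finset.Nat.antidiagonalTuple k m.toNat).filter (fun c => ∀ i, 0 < c i),
        (List.ofFn fun i : Fin k => gH μ (c i)).prod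

/-- `[a,b]_u = ab - u·ba`. -/
def brk (a b : FA I) (u : Kv) : FA I := a * b - u • (b * a)


-- ===== auxiliary lemmas =====
lemma vv_ne_zero : vv ≠ 0 := RatFunc.X_ne_zero

lemma X_pow_ne_one (n : ℕ) (hn : n ≠ 0) : (RatFunc.X : Kv) ^ n ≠ 1 := by
  intro h
  have : (Polynomial.X : Polynomial ℚ) ^ n = 1 := by
    apply RatFunc.algebraMap_injective ℚ
    simpa [map_pow, RatFunc.algebraMap_X] using h
  have := congrArg Polynomial.natDegree this
  simp [Polynomial.natDegree_X_pow] at this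
  exact hn this

lemma vvsub_ne_zero : vv - vv⁻¹ ≠ 0 := by
  intro h
  have h1 : vv = vv⁻¹ := sub_eq_zero.mp h
  have : vv * vv = 1 := by
    nth_rewrite 2 [h1]
    exact mul_inv_cancel₀ vv_ne_zero
  exact X_pow_ne_one 2 (by norm_num) (by rw [pow_two]; exact this)

lemma qint_neg_one : qint (-1) = -1 := by
  have : vv ^ (-1 : ℤ) - vv ^ (-(-1) : ℤ) = -(vv - vv⁻¹) := by
    simp only [zpow_neg, zpow_one, neg_neg]
    ring
  rw [qint, this, neg_div, div_self vvsub_ne_zero]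

lemma qint_two_ne_zero : qint 2 ≠ 0 := by
  apply div_ne_zero _ vvsub_ne_zero
  intro h
  have h1 : vv ^ (2:ℤ) = vv ^ (-2:ℤ) := sub_eq_zero.mp h
  have : vv ^ (4:ℕ) = 1 := by
    have := congrArg (· * vv ^ (2:ℤ)) h1
    simp only [← zpow_add₀ vv_ne_zero] at this
    norm_num at this
    rw [show (4:ℕ) = ((4:ℤ)).toNat from rfl, ← zpow_natCast]
    norm_num
    exact this
  exact X_pow_ne_one 4 (by norm_num) this

lemma one_sub_vvm2_ne_zero : (1:Kv) - vv ^ (-2:ℤ) ≠ 0 := by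
  intro h
  have h1 : (1:Kv) = vv ^ (-2:ℤ) := sub_eq_zero.mp h
  have : vv ^ (2:ℕ) = 1 := by
    have := congrArg (· * vv ^ (2:ℤ)) h1
    simp only [← zpow_add₀ vv_ne_zero, one_mul] at this
    norm_num at this
    rw [show (2:ℕ) = ((2:ℤ)).toNat from rfl, ← zpow_natCast]
    norm_num
    exact this
  exact X_pow_ne_one 2 (by norm_num) this

variable {I : Type}

lemma gTheta_neg (μ : I) (m : ℤ) (h : m < 0) : gTheta μ m = 0 := by
  simp [gTheta, h]

lemma gTheta_zero (μ : I) : gTheta μ 0 = (vv - vv⁻¹)⁻¹ • (1 : FA I) := by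
  simp [gTheta]

lemma gCpow_zero : (gCpow 0 : FA I) = 1 := by simp [gCpow]

lemma gCpow_one : (gCpow 1 : FA I) = gC := by simp [gCpow]

lemma brk_zero_left (b : FA I) (u : Kv) : brk 0 b u = 0 := by simp [brk]

lemma brk_zero_right (a : FA I) (u : Kv) : brk a 0 u = 0 := by simp [brk]

lemma brk_smul_one_left (s : Kv) (b : FA I) (u : Kv) :
    brk (s • (1 : FA I)) b u = (s - u * s) • b := by
  simp [brk, smul_mul_assoc, mul_smul_comm, smul_smul, sub_smul, mul_comm]

/-- `S(k₁,k₂|l;μ,ν)`. -/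
def Sterm (μ ν : I) (k1 k2 l : ℤ) : FA I :=
  gB μ k1 * gB μ k2 * gB ν l - qint 2 • (gB μ k1 * gB ν l * gB μ k2) +
    gB ν l * gB μ k1 * gB μ k2

/-- `𝕊(k₁,k₂|l;μ,ν)`: symmetrization of `S` in `k₁,k₂` (no doubling when `k₁ = k₂`). -/
def Ssym (μ ν : I) (k1 k2 l : ℤ) : FA I :=
  if k1 = k2 then Sterm μ ν k1 k2 l else Sterm μ ν k1 k2 l + Sterm μ ν k2 k1 l

/-- `R(k₁,k₂|l;μ,ν)`.  The sums over `p ≥ 0` (resp. `p ≥ 1`) are finite since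
`Θ_{μ,m} = 0` for `m < 0`; the chosen ranges contain all indices giving a nonzero term. -/
def Rterm (μ ν : I) (k1 k2 l : ℤ) : FA I :=
  gK μ * gCpow k1 *
    (-(∑ p ∈ Finset.range ((k2 - k1).toNat + 1),
        (vv ^ (2 * p) * qint 2) •
          (brk (gTheta μ (k2 - k1 - 2 * p - 1)) (gB ν (l - 1)) (vv ^ (-2 : ℤ)) *
            gC ^ (p + 1)))
      - (∑ p ∈ Finset.Icc 1 (k2 - k1).toNat,
          (vv ^ (2 * p - 1) * qint 2) •
            (brk (gB ν l) (gTheta μ (k2 - k1 - 2 * p)) (vv ^ (-2 : ℤ)) * gC ^ p))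
      - brk (gB ν l) (gTheta μ (k2 - k1)) (vv ^ (-2 : ℤ)))

/-- `ℝ(k₁,k₂|l;μ,ν)`: symmetrization of `R` in `k₁,k₂` (no doubling when `k₁ = k₂`). -/
def Rsym (μ ν : I) (k1 k2 l : ℤ) : FA I :=
  if k1 = k2 then Rterm μ ν k1 k2 l else Rterm μ ν k1 k2 l + Rterm μ ν k2 k1 l


/-- The coefficient appearing in the reduced Serre relation. -/
def acoef : Kv := qint 2 * ((vv - vv⁻¹)⁻¹ - vv ^ (-2:ℤ) * (vv - vv⁻¹)⁻¹)

lemma acoef_ne_zero : acoef ≠ 0 := by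
  have h : (vv - vv⁻¹)⁻¹ - vv ^ (-2:ℤ) * (vv - vv⁻¹)⁻¹
      = ((1:Kv) - vv ^ (-2:ℤ)) * (vv - vv⁻¹)⁻¹ := by ring
  rw [acoef, h]
  exact mul_ne_zero qint_two_ne_zero
    (mul_ne_zero one_sub_vvm2_ne_zero (inv_ne_zero vvsub_ne_zero))

lemma Rterm_one_zero (μ ν : I) (l : ℤ) : Rterm μ ν 1 0 l = 0 := by
  have h1 : ((0:ℤ) - 1).toNat = 0 := rfl
  rw [Rterm]
  rw [h1]
  rw [show Finset.Icc 1 0 = (∅ : Finset ℕ) by decide]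
  simp [Finset.sum_range_succ, gTheta_neg, brk_zero_left, brk_zero_right]

lemma Rterm_zero_one (μ ν : I) (l : ℤ) :
    Rterm μ ν 0 1 l =
      gK μ * (-(acoef • (gB ν (l - 1) * gC)) - brk (gB ν l) (gTheta μ 1) (vv ^ (-2:ℤ))) := by
  have h1 : ((1:ℤ) - 0).toNat = 1 := rfl
  rw [Rterm, h1]
  rw [show Finset.Icc 1 1 = ({1} : Finset ℕ) by decide]
  simp only [Finset.sum_range_succ, Finset.sum_range_zero, Finset.sum_singleton]
  norm_num
  rw [gTheta_zero, brk_smul_one_left]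
  rw [gTheta_neg μ (-2) (by norm_num), gTheta_neg μ (-1) (by norm_num)]
  simp [brk_zero_left, brk_zero_right, gCpow_zero, smul_smul, smul_mul_assoc, acoef, zpow_neg]

lemma Rsym_zero_one (μ ν : I) (l : ℤ) :
    Rsym μ ν 0 1 l =
      gK μ * (-(acoef • (gB ν (l - 1) * gC)) - brk (gB ν l) (gTheta μ 1) (vv ^ (-2:ℤ))) := by
  rw [Rsym, if_neg (by norm_num), Rterm_zero_one, Rterm_one_zero, add_zero]

/-- The defining relations of the universal ıquantum loop algebra attached to a
simply-laced GCM `c`. -/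
inductive IQLArel (c : I → I → ℤ) : FA I → FA I → Prop
  | KKinv (μ : I) : IQLArel c (gK μ * gKinv μ) 1
  | KinvK (μ : I) : IQLArel c (gKinv μ * gK μ) 1
  | CCinv : IQLArel c (gC * gCinv) 1
  | CinvC : IQLArel c (gCinv * gC) 1
  | Kcentral (μ : I) (x : FA I) : IQLArel c (gK μ * x) (x * gK μ)
  | Kinvcentral (μ : I) (x : FA I) : IQLArel c (gKinv μ * x) (x * gKinv μ)
  | Ccentral (x : FA I) : IQLArel c (gC * x) (x * gC)
  | Cinvcentral (x : FA I) : IQLArel c (gCinv * x) (x * gCinv)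
  | HH (μ ν : I) (m n : ℕ) (hm : 1 ≤ m) (hn : 1 ≤ n) :
      IQLArel c (gH μ m * gH ν n) (gH ν n * gH μ m)
  | HB (μ ν : I) (m : ℕ) (hm : 1 ≤ m) (l : ℤ) :
      IQLArel c (gH μ m * gB ν l - gB ν l * gH μ m)
        ((qint (m * c μ ν) / (m : Kv)) • gB ν (l + m) -
          (qint (m * c μ ν) / (m : Kv)) • (gB ν (l - m) * gC ^ m))
  | BBzero (μ ν : I) (h : c μ ν = 0) (k l : ℤ) :
      IQLArel c (gB μ k * gB ν l) (gB ν l * gB μ k)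
  | BBne (μ ν : I) (h : μ ≠ ν) (k l : ℤ) :
      IQLArel c
        (brk (gB μ k) (gB ν (l + 1)) (vv ^ (-c μ ν)) -
          vv ^ (-c μ ν) • brk (gB μ (k + 1)) (gB ν l) (vv ^ (c μ ν))) 0
  | BBsame (μ : I) (k l : ℤ) :
      IQLArel c
        (brk (gB μ k) (gB μ (l + 1)) (vv ^ (-2 : ℤ)) -
          vv ^ (-2 : ℤ) • brk (gB μ (k + 1)) (gB μ l) (vv ^ (2 : ℤ)))
        (vv ^ (-2 : ℤ) • (gTheta μ (l - k + 1) * gCpow k * gK μ) -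
          vv ^ (-4 : ℤ) • (gTheta μ (l - k - 1) * gCpow (k + 1) * gK μ) +
          vv ^ (-2 : ℤ) • (gTheta μ (k - l + 1) * gCpow l * gK μ) -
          vv ^ (-4 : ℤ) • (gTheta μ (k - l - 1) * gCpow (l + 1) * gK μ))
  | serre (μ ν : I) (h : c μ ν = -1) (k1 k2 l : ℤ) :
      IQLArel c (Ssym μ ν k1 k2 l) (Rsym μ ν k1 k2 l)

/-- The universal ıquantum loop algebra `ĩU^Dr` attached to the GCM `c`. -/
abbrev UiDr (c : I → I → ℤ) : Type := RingQuot (IQLArel c)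

/-- The canonical projection from the free algebra to `ĩU^Dr`. -/
def toUiDr (c : I → I → ℤ) : FA I →ₐ[Kv] UiDr c := RingQuot.mkAlgHom Kv (IQLArel c)


lemma toUiDr_rel {I : Type} {c : I → I → ℤ} {x y : FA I} (h : IQLArel c x y) :
    toUiDr c x = toUiDr c y := RingQuot.mkAlgHom_rel Kv h

/-- Vertices of the star-shaped graph `T_{p₁,…,p_t}`: the star point `none = ⋆` and the
branch vertices `some ⟨i,j⟩ = [i, j+1]` for `1 ≤ i ≤ t`, `1 ≤ j+1 ≤ p_i - 1`. -/
abbrev StarVertex (t : ℕ) (p : Fin t → ℕ) : Type := Option ((i : Fin t) × Fin (p i - 1))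

/-- The simply-laced generalized Cartan matrix of the star-shaped graph
`T_{p₁,…,p_t}`: `c_{μν} = -1` for adjacent vertices, `0` for non-adjacent distinct
vertices and `2` on the diagonal. -/
def starCartan (t : ℕ) (p : Fin t → ℕ) : StarVertex t p → StarVertex t p → ℤ
  | none, none => 2
  | none, some ⟨_, j⟩ => if (j : ℕ) = 0 then -1 else 0
  | some ⟨_, j⟩, none => if (j : ℕ) = 0 then -1 else 0
  | some ⟨i, j⟩, some ⟨i', j'⟩ =>
      if i.val = i'.val then
        if (j : ℕ) = (j' : ℕ) then 2
        else if (j : ℕ) + 1 = (j' : ℕ) ∨ (j' : ℕ) + 1 = (j : ℕ) then -1 else 0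
      else 0


/-- If `U` is a `ℚ(v)`-subalgebra of `ĩU^Dr` (for a star-shaped graph) containing
`C^{±1}` and all `K_μ^{±1}`, and if `c_{μν} = -1`, `B_{μ,l} ∈ U` for all `l ∈ ℤ`,
`Θ_{μ,m}, H_{μ,m} ∈ U` for all `m ≥ 1`, and `B_{ν,0} ∈ U`, then `B_{ν,l} ∈ U`
for all `l ∈ ℤ` and `Θ_{ν,m} ∈ U` for all `m ≥ 1`. -/
theorem UiDr_propagate (t : ℕ) (ht : 1 ≤ t) (p : Fin t → ℕ) (hp : ∀ i, 1 ≤ p i)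
    (U : Subalgebra Kv (UiDr (starCartan t p)))
    (hC : toUiDr (starCartan t p) gC ∈ U)
    (hCinv : toUiDr (starCartan t p) gCinv ∈ U)
    (hK : ∀ μ : StarVertex t p, toUiDr (starCartan t p) (gK μ) ∈ U)
    (hKinv : ∀ μ : StarVertex t p, toUiDr (starCartan t p) (gKinv μ) ∈ U)
    (μ ν : StarVertex t p) (hc : starCartan t p μ ν = -1)
    (hB : ∀ l : ℤ, toUiDr (starCartan t p) (gB μ l) ∈ U)
    (hTheta : ∀ m : ℕ, 1 ≤ m → toUiDr (starCartan t p) (gTheta μ (m : ℤ)) ∈ U)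
    (hH : ∀ m : ℕ, 1 ≤ m → toUiDr (starCartan t p) (gH μ m) ∈ U)
    (hB0 : toUiDr (starCartan t p) (gB ν 0) ∈ U) :
    (∀ l : ℤ, toUiDr (starCartan t p) (gB ν l) ∈ U) ∧
    (∀ m : ℕ, 1 ≤ m → toUiDr (starCartan t p) (gTheta ν (m : ℤ)) ∈ U) := by
  classical
  have f_rel : ∀ {x y : FA (StarVertex t p)}, IQLArel (starCartan t p) x y → toUiDr (starCartan t p) x = toUiDr (starCartan t p) y :=
    fun h => toUiDr_rel h
  have hKKinv : ∀ ρ, toUiDr (starCartan t p) (gK ρ) * toUiDr (starCartan t p) (gKinv ρ) = 1 := by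
    intro ρ
    rw [← map_mul, f_rel (IQLArel.KKinv ρ), map_one]
  have hKinvK : ∀ ρ, toUiDr (starCartan t p) (gKinv ρ) * toUiDr (starCartan t p) (gK ρ) = 1 := by
    intro ρ
    rw [← map_mul, f_rel (IQLArel.KinvK ρ), map_one]
  have hCCinv : toUiDr (starCartan t p) gC * toUiDr (starCartan t p) gCinv = 1 := by
    rw [← map_mul, f_rel IQLArel.CCinv, map_one]
  have smul_cancel : ∀ {x : UiDr (starCartan t p)} {a : Kv}, a ≠ 0 → a • x ∈ U → x ∈ U := by
    intro x a ha h
    have := U.smul_mem h a⁻¹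
    rwa [inv_smul_smul₀ ha] at this
  have mulK_cancel : ∀ (ρ) {x : UiDr (starCartan t p)}, x * toUiDr (starCartan t p) (gK ρ) ∈ U → x ∈ U := by
    intro ρ x h
    have := mul_mem h (hKinv ρ)
    rwa [mul_assoc, hKKinv ρ, mul_one] at this
  have mulC_cancel : ∀ {x : UiDr (starCartan t p)}, x * toUiDr (starCartan t p) gC ∈ U → x ∈ U := by
    intro x h
    have := mul_mem h hCinv
    rwa [mul_assoc, hCCinv, mul_one] at this
  have hCpowU : ∀ k : ℤ, toUiDr (starCartan t p) (gCpow k) ∈ U := by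
    intro k
    rw [gCpow]
    split <;> rw [map_pow]
    · exact pow_mem hC _
    · exact pow_mem hCinv _
  -- Step A: downward propagation for B_ν
  have hdown : ∀ l : ℤ, toUiDr (starCartan t p) (gB ν l) ∈ U → toUiDr (starCartan t p) (gB ν (l - 1)) ∈ U := by
    intro l hl
    have hrel := f_rel (IQLArel.serre μ ν hc 0 1 l)
    rw [Rsym_zero_one] at hrel
    simp only [brk, map_mul, map_sub, map_neg, map_smul] at hrel
    have hmem3 : ∀ (k1 k2 : ℤ), toUiDr (starCartan t p) (Sterm μ ν k1 k2 l) ∈ U := by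
      intro k1 k2
      simp only [Sterm, map_add, map_sub, map_smul, map_mul]
      exact add_mem (sub_mem (mul_mem (mul_mem (hB k1) (hB k2)) hl)
        (U.smul_mem (mul_mem (mul_mem (hB k1) hl) (hB k2)) _))
        (mul_mem (mul_mem hl (hB k1)) (hB k2))
    have hS : toUiDr (starCartan t p) (Ssym μ ν 0 1 l) ∈ U := by
      rw [Ssym, if_neg (by norm_num), map_add]
      exact add_mem (hmem3 0 1) (hmem3 1 0)
    have hT1' : toUiDr (starCartan t p) (gTheta μ 1) ∈ U := by
      have := hTheta 1 le_rfl
      simpa using this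
    have hZ : -(acoef • (toUiDr (starCartan t p) (gB ν (l - 1)) * toUiDr (starCartan t p) gC)) -
        (toUiDr (starCartan t p) (gB ν l) * toUiDr (starCartan t p) (gTheta μ 1) -
          vv ^ (-2:ℤ) • (toUiDr (starCartan t p) (gTheta μ 1) * toUiDr (starCartan t p) (gB ν l))) ∈ U := by
      have e : -(acoef • (toUiDr (starCartan t p) (gB ν (l - 1)) * toUiDr (starCartan t p) gC)) -
          (toUiDr (starCartan t p) (gB ν l) * toUiDr (starCartan t p) (gTheta μ 1) -
            vv ^ (-2:ℤ) • (toUiDr (starCartan t p) (gTheta μ 1) * toUiDr (starCartan t p) (gB ν l))) =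
          toUiDr (starCartan t p) (gKinv μ) * toUiDr (starCartan t p) (Ssym μ ν 0 1 l) := by
        rw [hrel, ← mul_assoc, hKinvK μ, one_mul]
      rw [e]
      exact mul_mem (hKinv μ) hS
    have hW : toUiDr (starCartan t p) (gB ν l) * toUiDr (starCartan t p) (gTheta μ 1) -
        vv ^ (-2:ℤ) • (toUiDr (starCartan t p) (gTheta μ 1) * toUiDr (starCartan t p) (gB ν l)) ∈ U :=
      sub_mem (mul_mem hl hT1')
        (U.smul_mem (mul_mem hT1' hl) _)
    have h6 : acoef • (toUiDr (starCartan t p) (gB ν (l - 1)) * toUiDr (starCartan t p) gC) ∈ U := by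
      have h6' := U.add_mem hZ hW
      rw [sub_add_cancel] at h6'
      simpa using U.neg_mem h6'
    rw [← smul_mul_assoc] at h6
    exact smul_cancel acoef_ne_zero (mulC_cancel h6)
  -- Step B: upward propagation for B_ν
  have hup : ∀ l : ℤ, toUiDr (starCartan t p) (gB ν (l - 1)) ∈ U → toUiDr (starCartan t p) (gB ν l) ∈ U →
      toUiDr (starCartan t p) (gB ν (l + 1)) ∈ U := by
    intro l h1 h2
    have hrel := f_rel (IQLArel.HB μ ν 1 le_rfl l)
    have hmemL : toUiDr (starCartan t p) (gH μ 1 * gB ν l - gB ν l * gH μ 1) ∈ U := by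
      rw [map_sub, map_mul, map_mul]
      exact sub_mem (mul_mem (hH 1 le_rfl) h2) (mul_mem h2 (hH 1 le_rfl))
    rw [hrel] at hmemL
    rw [map_sub, map_smul, map_smul, map_mul] at hmemL
    simp only [Nat.cast_one, pow_one] at hmemL
    have h5 := U.add_mem hmemL (U.smul_mem (mul_mem h1 hC)
      (qint (1 * starCartan t p μ ν) / 1))
    rw [sub_add_cancel] at h5
    have hqne : (qint (1 * starCartan t p μ ν) / 1 : Kv) ≠ 0 := by
      rw [hc]
      norm_num [qint_neg_one]
    exact smul_cancel hqne h5
  -- all B_ν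
  have hnegall : ∀ n : ℕ, toUiDr (starCartan t p) (gB ν (-(n:ℤ))) ∈ U := by
    intro n
    induction n with
    | zero => simpa using hB0
    | succ n ih =>
      have := hdown (-(n:ℤ)) ih
      rwa [show -(n:ℤ) - 1 = -((n+1:ℕ):ℤ) by push_cast; ring] at this
  have hposall : ∀ n : ℕ, toUiDr (starCartan t p) (gB ν (n:ℤ)) ∈ U := by
    intro n
    induction n using Nat.strong_induction_on with
    | _ n ih =>
      match n with
      | 0 => simpa using hB0
      | (n+1) =>
        have hprev : toUiDr (starCartan t p) (gB ν ((n:ℤ) - 1)) ∈ U := by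
          match n with
          | 0 => simpa using hnegall 1
          | (m+1) =>
            have := ih m (by omega)
            rwa [show ((m+1:ℕ):ℤ) - 1 = (m:ℤ) by push_cast; ring]
        have := hup (n:ℤ) hprev (ih n (by omega))
        rwa [show (n:ℤ) + 1 = ((n+1:ℕ):ℤ) by push_cast; ring] at this
  have hBall : ∀ l : ℤ, toUiDr (starCartan t p) (gB ν l) ∈ U := by
    intro l
    obtain ⟨n, rfl | rfl⟩ := l.eq_nat_or_neg
    · exact hposall n
    · exact hnegall n
  refine ⟨hBall, ?_⟩
  -- Step C: the Θ_ν
  have hvv2 : (vv ^ (-2:ℤ) : Kv) ≠ 0 := zpow_ne_zero _ vv_ne_zero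
  have hLHSmem : ∀ k l : ℤ,
      toUiDr (starCartan t p) (brk (gB ν k) (gB ν (l + 1)) (vv ^ (-2:ℤ))) -
        vv ^ (-2:ℤ) • toUiDr (starCartan t p) (brk (gB ν (k + 1)) (gB ν l) (vv ^ (2:ℤ))) ∈ U := by
    intro k l
    refine sub_mem ?_ (U.smul_mem ?_ _) <;>
      simp only [brk, map_sub, map_smul, map_mul]
    · exact sub_mem (mul_mem (hBall k) (hBall (l+1)))
        (U.smul_mem (mul_mem (hBall (l+1)) (hBall k)) _)
    · exact sub_mem (mul_mem (hBall (k+1)) (hBall l))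
        (U.smul_mem (mul_mem (hBall l) (hBall (k+1))) _)
  have hTstep : ∀ M : ℤ, 1 ≤ M →
      toUiDr (starCartan t p) (gTheta ν (M - 2)) ∈ U → toUiDr (starCartan t p) (gTheta ν (2 - M)) ∈ U →
      toUiDr (starCartan t p) (gTheta ν M) ∈ U := by
    intro M hM hm2 h2m
    have hrel := f_rel (IQLArel.BBsame ν 0 (M - 1))
    rw [show M - 1 - 0 + 1 = M by ring, show M - 1 - 0 - 1 = M - 2 by ring,
      show (0:ℤ) - (M - 1) + 1 = 2 - M by ring, show (0:ℤ) - (M - 1) - 1 = -M by ring,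
      show (0:ℤ) + 1 = 1 from zero_add 1, show M - 1 + 1 = M by ring,
      gTheta_neg ν (-M) (by omega), gCpow_zero, gCpow_one] at hrel
    simp only [map_add, map_sub, map_smul, map_mul, map_one, map_zero, zero_mul,
      smul_zero, sub_zero, mul_one] at hrel
    have e : vv ^ (-2:ℤ) • (toUiDr (starCartan t p) (gTheta ν M) * toUiDr (starCartan t p) (gK ν)) =
        (toUiDr (starCartan t p) (brk (gB ν 0) (gB ν M) (vv ^ (-2:ℤ))) -
          vv ^ (-2:ℤ) • toUiDr (starCartan t p) (brk (gB ν 1) (gB ν (M - 1)) (vv ^ (2:ℤ)))) +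
        vv ^ (-4:ℤ) • (toUiDr (starCartan t p) (gTheta ν (M - 2)) * toUiDr (starCartan t p) gC * toUiDr (starCartan t p) (gK ν)) -
        vv ^ (-2:ℤ) • (toUiDr (starCartan t p) (gTheta ν (2 - M)) * toUiDr (starCartan t p) (gCpow (M - 1)) *
          toUiDr (starCartan t p) (gK ν)) := by
      rw [hrel]; abel
    have hmem : vv ^ (-2:ℤ) • (toUiDr (starCartan t p) (gTheta ν M) * toUiDr (starCartan t p) (gK ν)) ∈ U := by
      rw [e]
      have hL := hLHSmem 0 (M - 1)
      rw [show M - 1 + 1 = M by ring, show (0:ℤ) + 1 = 1 from zero_add 1] at hL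
      exact sub_mem (add_mem hL
        (U.smul_mem (mul_mem (mul_mem hm2 hC) (hK ν)) _))
        (U.smul_mem (mul_mem (mul_mem h2m (hCpowU (M - 1))) (hK ν)) _)
    rw [← smul_mul_assoc] at hmem
    exact smul_cancel hvv2 (mulK_cancel ν hmem)
  have hT1 : toUiDr (starCartan t p) (gTheta ν 1) ∈ U := by
    have hrel := f_rel (IQLArel.BBsame ν 0 0)
    rw [show (0:ℤ) - 0 + 1 = 1 by ring, show (0:ℤ) - 0 - 1 = -1 by ring,
      show (0:ℤ) + 1 = 1 from zero_add 1,
      gTheta_neg ν (-1) (by omega), gCpow_zero, gCpow_one] at hrel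
    simp only [map_add, map_sub, map_smul, map_mul, map_one, map_zero, zero_mul,
      smul_zero, sub_zero, mul_one] at hrel
    have e : (vv ^ (-2:ℤ) + vv ^ (-2:ℤ)) •
        (toUiDr (starCartan t p) (gTheta ν 1) * toUiDr (starCartan t p) (gK ν)) =
        toUiDr (starCartan t p) (brk (gB ν 0) (gB ν 1) (vv ^ (-2:ℤ))) -
          vv ^ (-2:ℤ) • toUiDr (starCartan t p) (brk (gB ν 1) (gB ν 0) (vv ^ (2:ℤ))) := by
      rw [hrel, add_smul]
    have ha : (vv ^ (-2:ℤ) + vv ^ (-2:ℤ) : Kv) ≠ 0 := by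
      intro h
      apply hvv2
      have h2 : (2:Kv) * vv ^ (-2:ℤ) = 0 := by rw [two_mul]; exact h
      rcases mul_eq_zero.mp h2 with h' | h'
      · refine absurd h' ?_
        intro h3
        have h4 : algebraMap (Polynomial ℚ) (RatFunc ℚ) 2 = algebraMap (Polynomial ℚ) (RatFunc ℚ) 0 := by
          rw [map_ofNat, map_zero]; exact h3
        have h5 := RatFunc.algebraMap_injective ℚ h4
        norm_num at h5
      · exact h'
    have hmem : (vv ^ (-2:ℤ) + vv ^ (-2:ℤ)) •
        (toUiDr (starCartan t p) (gTheta ν 1) * toUiDr (starCartan t p) (gK ν)) ∈ U := by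
      rw [e]
      have hL := hLHSmem 0 0
      rwa [show (0:ℤ) + 1 = 1 from zero_add 1] at hL
    rw [← smul_mul_assoc] at hmem
    exact smul_cancel ha (mulK_cancel ν hmem)
  have hT0 : toUiDr (starCartan t p) (gTheta ν 0) ∈ U := by
    rw [gTheta_zero, map_smul, map_one]
    exact U.smul_mem (one_mem U) _
  intro m hm
  induction m using Nat.strong_induction_on with
  | _ m ih =>
    match m, hm with
    | 1, _ => exact hT1
    | 2, _ =>
      have := hTstep 2 (by omega) (by simpa using hT0) (by simpa using hT0)
      simpa using this
    | (n+3), _ =>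
      have hprev : toUiDr (starCartan t p) (gTheta ν (((n+3:ℕ):ℤ) - 2)) ∈ U := by
        rw [show ((n+3:ℕ):ℤ) - 2 = ((n+1:ℕ):ℤ) by push_cast; ring]
        exact ih (n+1) (by omega) (by omega)
      have hz : toUiDr (starCartan t p) (gTheta ν (2 - ((n+3:ℕ):ℤ))) ∈ U := by
        rw [gTheta_neg ν _ (by push_cast; omega), map_zero]
        exact zero_mem U
      exact hTstep ((n+3:ℕ):ℤ) (by push_cast; omega) hprev hz


end
end
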